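/- The group presented on six generators a, b, c, d, e, f with the six relations a·e·b⁻¹ = 1, b·f·c⁻¹ = 1, c·d·a⁻¹ = 1, a⁻¹·d·b = 1, b⁻¹·e·c = 1, c⁻¹·f·a = 1 (the trefoil template presentation) is isomorphic to the group presented on three generators a, b, c with relations a·b = b·c and b·c = c·a (the Wirtinger presentation of the trefoil). -/

import Mathlib

/-- The six relations of the trefoil template presentation on generators
`a, b, c, d, e, f` (encoded as `0, …, 5 : Fin 6`):
`a·e·b⁻¹`, `b·f·c⁻¹`, `c·d·a⁻¹`, `a⁻¹·d·b`, `b⁻¹·e·c`, `c⁻¹·f·a`. -/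
def trefoilTemplateRels : Set (FreeGroup (Fin 6)) :=
  let a := FreeGroup.of (0 : Fin 6)
  let b := FreeGroup.of (1 : Fin 6)
  let c := FreeGroup.of (2 : Fin 6)
  let d := FreeGroup.of (3 : Fin 6)
  let e := FreeGroup.of (4 : Fin 6)
  let f := FreeGroup.of (5 : Fin 6)
  {a * e * b⁻¹, b * f * c⁻¹, c * d * a⁻¹, a⁻¹ * d * b, b⁻¹ * e * c, c⁻¹ * f * a}

/-- The relations of the Wirtinger presentation of the trefoil on generators
`a, b, c` (encoded as `0, 1, 2 : Fin 3`): `a·b·(b·c)⁻¹` and `b·c·(c·a)⁻¹`,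
expressing `a·b = b·c` and `b·c = c·a`. -/
def trefoilWirtingerRels : Set (FreeGroup (Fin 3)) :=
  let a := FreeGroup.of (0 : Fin 3)
  let b := FreeGroup.of (1 : Fin 3)
  let c := FreeGroup.of (2 : Fin 3)
  {a * b * (b * c)⁻¹, b * c * (c * a)⁻¹}

/-!
The lower relations solve to `d = a b⁻¹`, `e = b c⁻¹`, `f = c a⁻¹`. Substituted into the upper
relations they become `a b = b c`, `b c = c a` and `c a = a b`, the last a consequence of the first
two. Hence `a, b, c ↦ a, b, c` and `d, e, f ↦ a b⁻¹, b c⁻¹, c a⁻¹` are mutually inverse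
homomorphisms between the two presented groups.
-/

namespace PresentedGroup

theorem lift_of_eq_one_of_mem {α : Type*} {rels : Set (FreeGroup α)} {r : FreeGroup α}
    (h : r ∈ rels) : FreeGroup.lift (of (rels := rels)) r = 1 := by
  rw [← FreeGroup.lift_unique (f := of) (mk rels) fun _ => rfl]
  exact one_of_mem h

end PresentedGroup

namespace Trefoil

open PresentedGroup (of)

abbrev TemplateGroup := PresentedGroup trefoilTemplateRels

abbrev WirtingerGroup := PresentedGroup trefoilWirtingerRels

theorem wirtinger_ab : (of 0 * of 1 : WirtingerGroup) = of 1 * of 2 :=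
  PresentedGroup.mk_eq_mk_of_mul_inv_mem (by simp [trefoilWirtingerRels])

theorem wirtinger_bc : (of 1 * of 2 : WirtingerGroup) = of 2 * of 0 :=
  PresentedGroup.mk_eq_mk_of_mul_inv_mem (by simp [trefoilWirtingerRels])

theorem template_relations :
    (of 0 * of 4 * (of 1)⁻¹ : TemplateGroup) = 1 ∧ (of 1 * of 5 * (of 2)⁻¹ : TemplateGroup) = 1 ∧
      (of 2 * of 3 * (of 0)⁻¹ : TemplateGroup) = 1 ∧ ((of 0)⁻¹ * of 3 * of 1 : TemplateGroup) = 1 ∧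
      ((of 1)⁻¹ * of 4 * of 2 : TemplateGroup) = 1 ∧
      ((of 2)⁻¹ * of 5 * of 0 : TemplateGroup) = 1 := by
  have h : ∀ r ∈ trefoilTemplateRels, FreeGroup.lift (of (rels := trefoilTemplateRels)) r = 1 :=
    fun _ => PresentedGroup.lift_of_eq_one_of_mem
  -- unfold only the membership: unfolding the relations in the type of `of` too blocks `map_mul`
  nth_rw 1 [trefoilTemplateRels] at h
  simpa only [Set.forall_mem_insert, Set.mem_singleton_iff, forall_eq, map_mul, map_inv,
    FreeGroup.lift_apply_of] using h

theorem template_lower_solved :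
    (of 3 : TemplateGroup) = of 0 * (of 1)⁻¹ ∧ (of 4 : TemplateGroup) = of 1 * (of 2)⁻¹ ∧
      (of 5 : TemplateGroup) = of 2 * (of 0)⁻¹ := by
  obtain ⟨-, -, -, hd, he, hf⟩ := template_relations
  simp only [mul_eq_one_iff_eq_inv, inv_mul_eq_iff_eq_mul] at hd he hf
  exact ⟨hd, he, hf⟩

theorem template_ab : (of 0 * of 1 : TemplateGroup) = of 1 * of 2 := by
  have h := template_relations.1
  rw [template_lower_solved.2.1, ← mul_assoc, mul_inv_eq_one, mul_inv_eq_iff_eq_mul] at h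
  exact h

theorem template_bc : (of 1 * of 2 : TemplateGroup) = of 2 * of 0 := by
  have h := template_relations.2.1
  rw [template_lower_solved.2.2, ← mul_assoc, mul_inv_eq_one, mul_inv_eq_iff_eq_mul] at h
  exact h

noncomputable def templateToWirtinger : TemplateGroup →* WirtingerGroup :=
  PresentedGroup.toGroup
    (f := ![of 0, of 1, of 2, of 0 * (of 1)⁻¹, of 1 * (of 2)⁻¹, of 2 * (of 0)⁻¹]) <| by
    have hca : (of 2 * of 0 : WirtingerGroup) = of 0 * of 1 :=
      (wirtinger_ab.trans wirtinger_bc).symm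
    simp only [trefoilTemplateRels, Set.forall_mem_insert, Set.mem_singleton_iff, forall_eq,
      map_mul, map_inv, FreeGroup.lift_apply_of, Matrix.cons_val, Matrix.cons_val_zero,
      Matrix.cons_val_one, inv_mul_cancel_left, inv_mul_cancel, and_true]
    refine ⟨?_, ?_, ?_⟩
    · rw [← mul_assoc, wirtinger_ab]; group
    · rw [← mul_assoc, wirtinger_bc]; group
    · rw [← mul_assoc, hca]; group

noncomputable def wirtingerToTemplate : WirtingerGroup →* TemplateGroup :=
  PresentedGroup.toGroup (f := ![of 0, of 1, of 2]) <| by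
    simp only [trefoilWirtingerRels, Set.forall_mem_insert, Set.mem_singleton_iff, forall_eq,
      map_mul, map_inv, FreeGroup.lift_apply_of, Matrix.cons_val, Matrix.cons_val_zero,
      Matrix.cons_val_one, mul_inv_eq_one]
    exact ⟨template_ab, template_bc⟩

theorem wirtingerToTemplate_comp_templateToWirtinger :
    wirtingerToTemplate.comp templateToWirtinger = MonoidHom.id TemplateGroup := by
  obtain ⟨hd, he, hf⟩ := template_lower_solved
  refine PresentedGroup.ext fun i => ?_
  fin_cases i <;> simp [templateToWirtinger, wirtingerToTemplate, hd, he, hf]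

theorem templateToWirtinger_comp_wirtingerToTemplate :
    templateToWirtinger.comp wirtingerToTemplate = MonoidHom.id WirtingerGroup := by
  refine PresentedGroup.ext fun i => ?_
  fin_cases i <;> simp [templateToWirtinger, wirtingerToTemplate]

noncomputable def templateEquivWirtinger : TemplateGroup ≃* WirtingerGroup :=
  templateToWirtinger.toMulEquiv wirtingerToTemplate
    wirtingerToTemplate_comp_templateToWirtinger templateToWirtinger_comp_wirtingerToTemplate

end Trefoil

/-- The trefoil template presentation is isomorphic to the Wirtinger
presentation `⟨a, b, c | a·b = b·c, b·c = c·a⟩` of the trefoil. -/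
theorem trefoil_template_iso_wirtinger :
    Nonempty (PresentedGroup trefoilTemplateRels ≃* PresentedGroup trefoilWirtingerRels) :=
  ⟨Trefoil.templateEquivWirtinger⟩
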